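/- arXiv:2209.12169 — 2 statements merged into one kernel-verified Lean document; each statement's English description precedes it below -/
import Mathlib

section
/- Let n ≥ 1 and k ≥ 0. Take m = 2, ℓ = 1, Λ = (n,0) ∈ ℤ², and ū = w̄ = (1,1,…,1) of length k. Then S_ū^w̄ is all of S_k, and Σ_{σ ∈ S_k} Π_{t=1}^k [n − 2·#{1 ≤ j ≤ t : σ(j) < σ(t)}]·q^{n−2t+1} = q^{k(n−k)}·([k]!)²·[n choose k], where [n choose k] is the quantum binomial coefficient (which vanishes for k > n). (This is the closed formula evaluation of the k-colored circle web, whose evaluation is the categorical dimension [n choose k] of the object ∧^k.) -/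
open LaurentPolynomial Finset

noncomputable section

/-- The quantum integer `[a] = q^(a-1) + q^(a-3) + ⋯ + q^(-a+1)` for `a ≥ 0`,
with `[a] = -[-a]` for `a < 0`. -/
def qint (a : ℤ) : LaurentPolynomial ℤ :=
  if 0 ≤ a then ∑ i ∈ Finset.range a.toNat, T (a - 1 - 2 * i)
  else - ∑ i ∈ Finset.range (-a).toNat, T (-a - 1 - 2 * i)

/-- The quantum factorial `[b]! = [b][b-1]⋯[1]`. -/
def qfac (b : ℕ) : LaurentPolynomial ℤ :=
  ∏ i ∈ Finset.range b, qint (i + 1)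

/-- The simple root `α_i = e_i - e_{i+1} ∈ ℤ^m` (with `1 ≤ i ≤ m-1`, one-indexed
entries realized on `Fin m`). -/
def simpleRoot (m i : ℕ) : Fin m → ℤ :=
  fun j => (if (j : ℕ) + 1 = i then 1 else 0) - (if (j : ℕ) = i then 1 else 0)

/-- The standard dot product on `ℤ^m`. -/
def dotP {m : ℕ} (v w : Fin m → ℤ) : ℤ := ∑ j, v j * w j

/-- The highest weight `Λ = (n,…,n,0,…,0)` with `ℓ` entries equal to `n`. -/
def LambdaVec (m n ℓ : ℕ) : Fin m → ℤ := fun j => if (j : ℕ) < ℓ then (n : ℤ) else 0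

/-- `N^Λ(σ, ū, t) = ⟨Λ - ∑_{j ≤ t, σ(j) < σ(t)} α_{ū_j}, α_{ū_t}⟩`. -/
def Nwt {m N : ℕ} (Λ : Fin m → ℤ) (σ : Equiv.Perm (Fin N)) (u : Fin N → ℕ) (t : Fin N) : ℤ :=
  dotP (Λ - ∑ j ∈ Finset.univ.filter (fun j => j ≤ t ∧ σ j < σ t), simpleRoot m (u j))
    (simpleRoot m (u t))

/-- `X_σ = ∏_t [N^Λ(σ,ū,t)]·q^(N^Λ(e,ū,t) - 1)`. -/
def Xsig {m N : ℕ} (Λ : Fin m → ℤ) (σ : Equiv.Perm (Fin N)) (u : Fin N → ℕ) :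
    LaurentPolynomial ℤ :=
  ∏ t : Fin N, qint (Nwt Λ σ u t) * T (Nwt Λ 1 u t - 1)

/-- The set of possible crossings `S_ū^w̄ = {σ : ū_j = w̄_{σ(j)} for all j}`. -/
def Sset {N : ℕ} (u w : Fin N → ℕ) : Finset (Equiv.Perm (Fin N)) :=
  Finset.univ.filter fun σ => ∀ j, u j = w (σ j)

/-- The evaluation `⟪ū, w̄⟫ = ∑_{σ ∈ S_ū^w̄} X_σ`. -/
def pairing {m N : ℕ} (Λ : Fin m → ℤ) (u w : Fin N → ℕ) : LaurentPolynomial ℤ :=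
  ∑ σ ∈ Sset u w, Xsig Λ σ u

/-! ### Auxiliary lemmas on quantum integers -/

private lemma qint_natCast (a : ℕ) :
    qint (a : ℤ) = ∑ i ∈ Finset.range a, T ((a : ℤ) - 1 - 2 * i) := by
  simp [qint]

private lemma qint_neg (a : ℤ) : qint (-a) = - qint a := by
  rcases lt_trichotomy a 0 with h | rfl | h
  · have h1 : (0:ℤ) ≤ -a := by omega
    have h2 : ¬ ((0:ℤ) ≤ a) := by omega
    simp [qint, h1, h2, not_lt.2 h.le]
  · simp [qint]
  · have h1 : ¬ ((0:ℤ) ≤ -a) := by omega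
    have h2 : (0:ℤ) ≤ a := by omega
    simp [qint, h1, h2, not_le.2 h]

private lemma D_mul_T (x : ℤ) :
    (T 1 - T (-1) : LaurentPolynomial ℤ) * T x = T (x + 1) - T (x - 1) := by
  rw [sub_mul, ← T_add, ← T_add, show (1:ℤ) + x = x + 1 from by ring,
    show (-1:ℤ) + x = x - 1 from by ring]

private lemma D_mul_qint_nat (m : ℕ) :
    (T 1 - T (-1) : LaurentPolynomial ℤ) * qint (m : ℤ) = T (m : ℤ) - T (-(m : ℤ)) := by
  rw [qint_natCast, Finset.mul_sum]
  have step : ∀ i ∈ Finset.range m,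
      (T 1 - T (-1) : LaurentPolynomial ℤ) * T ((m : ℤ) - 1 - 2 * i)
      = T ((m:ℤ) - 2 * (i:ℤ)) - T ((m:ℤ) - 2 * ((i+1 : ℕ) : ℤ)) := by
    intro i _
    rw [D_mul_T, show (m:ℤ) - 1 - 2 * (i:ℤ) + 1 = (m:ℤ) - 2 * (i:ℤ) from by ring,
      show (m:ℤ) - 1 - 2 * (i:ℤ) - 1 = (m:ℤ) - 2 * ((i+1 : ℕ) : ℤ) from by push_cast; ring]
  rw [Finset.sum_congr rfl step,
    Finset.sum_range_sub' (fun j : ℕ => T ((m:ℤ) - 2 * (j:ℤ))) m,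
    show (m:ℤ) - 2 * ((0:ℕ):ℤ) = (m:ℤ) from by push_cast; ring,
    show (m:ℤ) - 2 * ((m:ℕ):ℤ) = -(m:ℤ) from by ring]

private lemma D_mul_qint (a : ℤ) :
    (T 1 - T (-1) : LaurentPolynomial ℤ) * qint a = T a - T (-a) := by
  obtain ⟨m, rfl | rfl⟩ := a.eq_nat_or_neg
  · exact D_mul_qint_nat m
  · rw [qint_neg, neg_neg, mul_neg, D_mul_qint_nat, neg_sub]

private lemma D_ne_zero : (T 1 - T (-1) : LaurentPolynomial ℤ) ≠ 0 := by
  intro h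
  have h2 : (T 1 : LaurentPolynomial ℤ) = T (-1) := sub_eq_zero.mp h
  have h3 : (Finsupp.single (1:ℤ) (1:ℤ) : ℤ →₀ ℤ) = Finsupp.single (-1:ℤ) (1:ℤ) := congrArg AddMonoidAlgebra.coeff h2
  rw [Finsupp.single_eq_single_iff] at h3
  omega

private lemma sum_qint (a : ℕ) (m : ℤ) :
    ∑ i ∈ Finset.range a, qint (m + (a:ℤ) - 1 - 2 * (i:ℤ)) = qint (a : ℤ) * qint m := by
  apply mul_left_cancel₀ D_ne_zero
  apply mul_left_cancel₀ D_ne_zero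
  have key : (T 1 - T (-1) : LaurentPolynomial ℤ) *
        ((T 1 - T (-1) : LaurentPolynomial ℤ) *
          ∑ i ∈ Finset.range a, qint (m + (a:ℤ) - 1 - 2 * (i:ℤ)))
      = (T (m + a) - T (m - a)) - (T ((a:ℤ) - m) - T (-m - a)) := by
    rw [Finset.mul_sum, Finset.mul_sum]
    have step : ∀ i ∈ Finset.range a,
        (T 1 - T (-1) : LaurentPolynomial ℤ) *
            ((T 1 - T (-1) : LaurentPolynomial ℤ) * qint (m + (a:ℤ) - 1 - 2 * (i:ℤ)))
        = (T (m + (a:ℤ) - 2 * (i:ℤ)) - T (m + (a:ℤ) - 2 * ((i+1 : ℕ):ℤ)))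
          - (T (2 * ((i+1 : ℕ):ℤ) - m - (a:ℤ)) - T (2 * (i:ℤ) - m - (a:ℤ))) := by
      intro i _
      rw [D_mul_qint, mul_sub, D_mul_T, D_mul_T,
        show m + (a:ℤ) - 1 - 2 * (i:ℤ) + 1 = m + (a:ℤ) - 2 * (i:ℤ) from by ring,
        show m + (a:ℤ) - 1 - 2 * (i:ℤ) - 1 = m + (a:ℤ) - 2 * ((i+1 : ℕ):ℤ) from by
          push_cast; ring,
        show -(m + (a:ℤ) - 1 - 2 * (i:ℤ)) + 1 = 2 * ((i+1 : ℕ):ℤ) - m - (a:ℤ) from by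
          push_cast; ring,
        show -(m + (a:ℤ) - 1 - 2 * (i:ℤ)) - 1 = 2 * (i:ℤ) - m - (a:ℤ) from by ring]
    rw [Finset.sum_congr rfl step, Finset.sum_sub_distrib,
      Finset.sum_range_sub' (fun j : ℕ => T (m + (a:ℤ) - 2 * (j:ℤ))) a,
      Finset.sum_range_sub (fun j : ℕ => T (2 * (j:ℤ) - m - (a:ℤ))) a,
      show m + (a:ℤ) - 2 * ((0:ℕ):ℤ) = m + (a:ℤ) from by push_cast; ring,
      show m + (a:ℤ) - 2 * ((a:ℕ):ℤ) = m - (a:ℤ) from by ring,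
      show 2 * ((a:ℕ):ℤ) - m - (a:ℤ) = (a:ℤ) - m from by ring,
      show 2 * ((0:ℕ):ℤ) - m - (a:ℤ) = -m - (a:ℤ) from by push_cast; ring]
  have key2 : (T 1 - T (-1) : LaurentPolynomial ℤ) *
        ((T 1 - T (-1) : LaurentPolynomial ℤ) * (qint (a:ℤ) * qint m))
      = (T (m + a) - T (m - a)) - (T ((a:ℤ) - m) - T (-m - a)) := by
    rw [show (T 1 - T (-1) : LaurentPolynomial ℤ) *
          ((T 1 - T (-1) : LaurentPolynomial ℤ) * (qint (a:ℤ) * qint m))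
        = ((T 1 - T (-1) : LaurentPolynomial ℤ) * qint (a:ℤ)) *
            ((T 1 - T (-1) : LaurentPolynomial ℤ) * qint m) from by ring,
      D_mul_qint, D_mul_qint, sub_mul, mul_sub, mul_sub, ← T_add, ← T_add, ← T_add, ← T_add,
      show (a:ℤ) + m = m + (a:ℤ) from by ring,
      show (a:ℤ) + -m = (a:ℤ) - m from by ring,
      show -(a:ℤ) + m = m - (a:ℤ) from by ring,
      show -(a:ℤ) + -m = -m - (a:ℤ) from by ring]
    ring
  rw [key, key2]

private lemma prod_T {ι : Type*} (s : Finset ι) (g : ι → ℤ) :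
    ∏ i ∈ s, (T (g i) : LaurentPolynomial ℤ) = T (∑ i ∈ s, g i) := by
  induction s using Finset.cons_induction with
  | empty => simp
  | cons a s ha ih => rw [Finset.prod_cons, Finset.sum_cons, T_add, ih]

private lemma sum_exp (n k : ℕ) :
    ∑ t : Fin k, ((n:ℤ) - 2 * (t:ℤ) - 1) = (k:ℤ) * ((n:ℤ) - (k:ℤ)) := by
  induction k with
  | zero => simp
  | succ k ih =>
    rw [Fin.sum_univ_castSucc]
    simp only [Fin.coe_castSucc, Fin.val_last]
    rw [ih]
    push_cast
    ring

/-! ### The permutation-code bijection -/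

private lemma sum_perm_code {R : Type*} [CommRing R] (f : ℕ → R) (k : ℕ) :
    ∑ σ : Equiv.Perm (Fin k), ∏ t : Fin k,
        f ((Finset.univ.filter fun j => j ≤ t ∧ σ j < σ t).card)
      = ∏ t ∈ Finset.range k, ∑ c ∈ Finset.range (t+1), f c := by
  induction k with
  | zero => simp
  | succ k ih =>
    classical
    set φ : Fin (k+1) × Equiv.Perm (Fin k) → Equiv.Perm (Fin (k+1)) := fun pe =>
      (finSuccEquiv' (Fin.last k)).trans
        ((Equiv.optionCongr pe.2).trans (finSuccEquiv' pe.1).symm) with hφ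
    have hlast : ∀ p e, φ (p, e) (Fin.last k) = p := by
      intro p e
      simp only [hφ, Equiv.trans_apply, finSuccEquiv'_at, Equiv.optionCongr_apply,
        Option.map_none, finSuccEquiv'_symm_none]
    have hcast : ∀ (p : Fin (k+1)) (e : Equiv.Perm (Fin k)) (j : Fin k),
        φ (p, e) (Fin.castSucc j) = p.succAbove (e j) := by
      intro p e j
      have h1 : Fin.castSucc j = (Fin.last k).succAbove j := by
        rw [Fin.succAbove_last]
      rw [h1]
      simp only [hφ, Equiv.trans_apply, finSuccEquiv'_succAbove, Equiv.optionCongr_apply,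
        Option.map_some, finSuccEquiv'_symm_some]
    have hbij : Function.Bijective φ := by
      rw [Fintype.bijective_iff_injective_and_card]
      constructor
      · rintro ⟨p, e⟩ ⟨p', e'⟩ h
        have hp : p = p' := by rw [← hlast p e, ← hlast p' e', h]
        subst hp
        have he : e = e' := by
          ext j
          have h2 : φ (p, e) (Fin.castSucc j) = φ (p, e') (Fin.castSucc j) := by rw [h]
          rw [hcast, hcast] at h2
          exact congrArg Fin.val (Fin.succAbove_right_injective h2)
        rw [he]
      · simp [Fintype.card_perm, Nat.factorial_succ]
    have hcard_last : ∀ (p : Fin (k+1)) (e : Equiv.Perm (Fin k)),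
        (Finset.univ.filter fun j => j ≤ Fin.last k ∧ φ (p, e) j < φ (p, e) (Fin.last k)).card
          = (p : ℕ) := by
      intro p e
      have hset : (Finset.univ.filter fun j => j ≤ Fin.last k ∧ φ (p, e) j < φ (p, e) (Fin.last k))
          = Finset.univ.filter fun j => φ (p, e) j < p := by
        apply Finset.filter_congr
        intro j _
        simp [Fin.le_last, hlast]
      rw [hset]
      have himg : Finset.image (φ (p, e)) (Finset.univ.filter fun j => φ (p, e) j < p)
          = Finset.univ.filter fun x => x < p := by
        ext x
        simp only [Finset.mem_image, Finset.mem_filter, Finset.mem_univ, true_and]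
        constructor
        · rintro ⟨j, hj, rfl⟩; exact hj
        · intro hx
          exact ⟨(φ (p, e)).symm x, by simpa using hx, by simp⟩
      have hcardim := Finset.card_image_of_injective
        (Finset.univ.filter fun j => φ (p, e) j < p) (φ (p, e)).injective
      rw [himg] at hcardim
      rw [← hcardim]
      have hIio : (Finset.univ.filter fun x : Fin (k+1) => x < p) = Finset.Iio p := by
        ext x; simp
      rw [hIio, Fin.card_Iio]
    have hcard_cast : ∀ (p : Fin (k+1)) (e : Equiv.Perm (Fin k)) (s : Fin k),
        (Finset.univ.filter fun j : Fin (k+1) =>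
            j ≤ Fin.castSucc s ∧ φ (p, e) j < φ (p, e) (Fin.castSucc s)).card
          = (Finset.univ.filter fun i : Fin k => i ≤ s ∧ e i < e s).card := by
      intro p e s
      have hmap : (Finset.univ.filter fun j : Fin (k+1) =>
            j ≤ Fin.castSucc s ∧ φ (p, e) j < φ (p, e) (Fin.castSucc s))
          = (Finset.univ.filter fun i : Fin k => i ≤ s ∧ e i < e s).map Fin.castSuccEmb := by
        ext j
        simp only [Finset.mem_filter, Finset.mem_univ, true_and, Finset.mem_map,
          Fin.coe_castSuccEmb]
        constructor
        · rintro ⟨hle, hlt⟩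
          have hne : j ≠ Fin.last k := by
            intro hj
            subst hj
            exact absurd hle (not_le.2 (Fin.castSucc_lt_last s))
          obtain ⟨i, rfl⟩ := Fin.exists_castSucc_eq.2 hne
          refine ⟨i, ⟨Fin.castSucc_le_castSucc_iff.mp hle, ?_⟩, rfl⟩
          rw [hcast, hcast] at hlt
          exact Fin.succAbove_lt_succAbove_iff.mp hlt
        · rintro ⟨i, ⟨hle, hlt⟩, rfl⟩
          refine ⟨Fin.castSucc_le_castSucc_iff.mpr hle, ?_⟩
          rw [hcast, hcast]
          exact Fin.succAbove_lt_succAbove_iff.mpr hlt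
      rw [hmap, Finset.card_map]
    rw [← Fintype.sum_bijective φ hbij
      (fun pe => ∏ t : Fin (k+1),
        f ((Finset.univ.filter fun j => j ≤ t ∧ φ pe j < φ pe t).card))
      _ (fun pe => rfl)]
    rw [Fintype.sum_prod_type]
    have hprod : ∀ (p : Fin (k+1)) (e : Equiv.Perm (Fin k)),
        (∏ t : Fin (k+1), f ((Finset.univ.filter fun j => j ≤ t ∧ φ (p, e) j < φ (p, e) t).card))
        = (∏ s : Fin k, f ((Finset.univ.filter fun i => i ≤ s ∧ e i < e s).card)) * f (p : ℕ) := by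
      intro p e
      rw [Fin.prod_univ_castSucc, hcard_last]
      congr 1
      exact Finset.prod_congr rfl fun s _ => by rw [hcard_cast]
    calc ∑ p : Fin (k+1), ∑ e : Equiv.Perm (Fin k),
          ∏ t : Fin (k+1), f ((Finset.univ.filter fun j => j ≤ t ∧ φ (p, e) j < φ (p, e) t).card)
        = ∑ p : Fin (k+1), ∑ e : Equiv.Perm (Fin k),
          (∏ s : Fin k, f ((Finset.univ.filter fun i => i ≤ s ∧ e i < e s).card)) * f (p : ℕ) := by
          exact Finset.sum_congr rfl fun p _ => Finset.sum_congr rfl fun e _ => hprod p e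
      _ = (∑ e : Equiv.Perm (Fin k),
            ∏ s : Fin k, f ((Finset.univ.filter fun i => i ≤ s ∧ e i < e s).card))
          * ∑ p : Fin (k+1), f (p : ℕ) := by
          rw [Finset.sum_comm, Finset.sum_mul]
          exact Finset.sum_congr rfl fun e _ => by rw [← Finset.mul_sum]
      _ = (∏ t ∈ Finset.range k, ∑ c ∈ Finset.range (t+1), f c)
          * ∑ c ∈ Finset.range (k+1), f c := by
          rw [ih, Fin.sum_univ_eq_sum_range]
      _ = ∏ t ∈ Finset.range (k+1), ∑ c ∈ Finset.range (t+1), f c := by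
          rw [Finset.prod_range_succ]


/-- Closed formula evaluation of the `k`-colored circle: for `Λ = (n,0)` and
`ū = w̄ = (1,…,1)` of length `k`, the set `S_ū^w̄` is all of `S_k` and
`∑_{σ ∈ S_k} ∏_{t=1}^k [n - 2·#{j ≤ t : σ(j) < σ(t)}]·q^(n-2t+1)
  = q^(k(n-k))·([k]!)²·[n choose k]`,
where the quantum binomial `binom = [n choose k]` is characterized by
`binom·[k]! = [n][n-1]⋯[n-k+1]`. -/
theorem circle_evaluation (n k : ℕ) (hn : 1 ≤ n)
    (binom : LaurentPolynomial ℤ)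
    (hbinom : binom * qfac k = ∏ i ∈ Finset.range k, qint ((n : ℤ) - i)) :
    Sset (fun _ : Fin k => 1) (fun _ : Fin k => 1) = Finset.univ ∧
    ∑ σ : Equiv.Perm (Fin k), ∏ t : Fin k,
        qint ((n : ℤ) - 2 * ((Finset.univ.filter fun j => j ≤ t ∧ σ j < σ t).card)) *
          T ((n : ℤ) - 2 * (t : ℤ) - 1)
      = T ((k : ℤ) * ((n : ℤ) - (k : ℤ))) * (qfac k) ^ 2 * binom := by
  constructor
  · ext σ; simp [Sset]
  · have hsplit : ∀ σ : Equiv.Perm (Fin k),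
        (∏ t : Fin k,
          qint ((n : ℤ) - 2 * ((Finset.univ.filter fun j => j ≤ t ∧ σ j < σ t).card)) *
            T ((n : ℤ) - 2 * (t : ℤ) - 1))
        = (∏ t : Fin k,
            qint ((n : ℤ) - 2 * ((Finset.univ.filter fun j => j ≤ t ∧ σ j < σ t).card)))
          * T ((k : ℤ) * ((n : ℤ) - (k : ℤ))) := by
      intro σ
      rw [Finset.prod_mul_distrib, prod_T, sum_exp]
    rw [Finset.sum_congr rfl fun σ _ => hsplit σ, ← Finset.sum_mul]
    rw [sum_perm_code (fun c : ℕ => qint ((n : ℤ) - 2 * (c : ℤ))) k]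
    have hcell : ∀ t : ℕ,
        ∑ c ∈ Finset.range (t+1), qint ((n : ℤ) - 2 * (c:ℤ))
        = qint ((t:ℤ) + 1) * qint ((n:ℤ) - (t:ℤ)) := by
      intro t
      have h1 := sum_qint (t+1) ((n:ℤ) - (t:ℤ))
      rw [show (((t+1 : ℕ)):ℤ) = (t:ℤ) + 1 from by push_cast; ring] at h1
      rw [← h1]
      apply Finset.sum_congr rfl
      intro c _
      congr 1
      ring
    rw [Finset.prod_congr rfl fun t _ => hcell t, Finset.prod_mul_distrib]
    rw [show (∏ t ∈ Finset.range k, qint ((t:ℤ) + 1)) = qfac k from rfl, ← hbinom]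
    ring

end
end

section
/- Let m ≥ 2, n ≥ 1, 0 ≤ ℓ ≤ m, Λ = (n,…,n,0,…,0) ∈ ℤ^m with ℓ entries equal to n, and let ū, w̄ ∈ {1,…,m−1}^N. (i) If 1 ≤ t < N and |ū_t − ū_{t+1}| ≥ 2, and ū′ is obtained from ū by exchanging its t-th and (t+1)-st entries, then ⟪ū′,w̄⟫ = ⟪ū,w̄⟫. (ii) Likewise, if 1 ≤ t < N and |w̄_t − w̄_{t+1}| ≥ 2, and w̄′ is obtained from w̄ by exchanging its t-th and (t+1)-st entries, then ⟪ū,w̄′⟫ = ⟪ū,w̄⟫. (This is the combinatorial form of the paper's claim that the closed formula is independent of the chosen F-form: distant F-operators commute and produce the same web.) -/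
/-!
Composing a crossing σ with the transposition of positions `t, t+1` (on the right when `ū` is
changed, on the left when `w̄` is) gives a bijection between the relevant sets `S`. It preserves
every weight `N^Λ(σ, ū, s)`: the only pair of positions whose relative order changes contributes
`⟨α_i, α_j⟩` with `|i - j| ≥ 2`, which vanishes. Hence it preserves `X_σ`, and so the sum.
-/

open LaurentPolynomial Finset

noncomputable section

lemma dotP_eq_dotProduct {m : ℕ} (v w : Fin m → ℤ) : dotP v w = v ⬝ᵥ w := rfl

lemma dotP_comm {m : ℕ} (v w : Fin m → ℤ) : dotP v w = dotP w v :=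
  dotProduct_comm v w

lemma dotP_simpleRoot_eq_zero {m a b : ℕ} (h : 2 ≤ |(a : ℤ) - b|) :
    dotP (simpleRoot m a) (simpleRoot m b) = 0 := by
  have hab : (a : ℤ) + 2 ≤ b ∨ (b : ℤ) + 2 ≤ a := by
    rcases abs_cases ((a : ℤ) - b) with ⟨_, _⟩ | ⟨_, _⟩ <;> omega
  refine sum_eq_zero fun j _ => ?_
  simp only [simpleRoot]
  split_ifs <;> omega

lemma Finset.sum_filter_congr_of_ne_zero {ι M : Type*} [AddCommMonoid M] {s : Finset ι}
    {p q : ι → Prop} [DecidablePred p] [DecidablePred q] {f : ι → M}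
    (h : ∀ j ∈ s, f j ≠ 0 → (p j ↔ q j)) :
    ∑ j ∈ s with p j, f j = ∑ j ∈ s with q j, f j := by
  simp only [sum_filter]
  refine sum_congr rfl fun j hj => ?_
  by_cases hf : f j = 0
  · simp [hf]
  · exact if_congr (h j hj hf) rfl rfl

lemma Finset.sum_filter_comp_equiv {ι M : Type*} [Fintype ι] [AddCommMonoid M] (e : ι ≃ ι)
    (p : ι → Prop) [DecidablePred p] (f : ι → M) :
    ∑ j with p j, f j = ∑ k with p (e k), f (e k) :=
  (sum_equiv e (by simp) fun _ _ => rfl).symm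

lemma swap_lt_swap_iff_of_succ_eq {N : ℕ} {a b j k : Fin N} (hab : (a : ℕ) + 1 = b)
    (h : ¬(j = a ∧ k = b)) (h' : ¬(j = b ∧ k = a)) :
    Equiv.swap a b j < Equiv.swap a b k ↔ j < k := by
  simp only [Equiv.swap_apply_def, Fin.lt_def, Fin.ext_iff] at *
  split_ifs <;> omega

lemma swap_le_swap_iff_of_succ_eq {N : ℕ} {a b j k : Fin N} (hab : (a : ℕ) + 1 = b)
    (h : ¬(j = a ∧ k = b)) (h' : ¬(j = b ∧ k = a)) :
    Equiv.swap a b j ≤ Equiv.swap a b k ↔ j ≤ k := by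
  simpa only [not_lt] using (swap_lt_swap_iff_of_succ_eq hab (fun h'' => h' h''.symm)
    (fun h'' => h h''.symm)).not

section Swap

variable {m N : ℕ} (Λ : Fin m → ℤ) (u w : Fin N → ℕ) {a b : Fin N}

lemma Nwt_eq_sub_sum (σ : Equiv.Perm (Fin N)) (t : Fin N) :
    Nwt Λ σ u t = dotP Λ (simpleRoot m (u t))
      - ∑ j with j ≤ t ∧ σ j < σ t, dotP (simpleRoot m (u j)) (simpleRoot m (u t)) := by
  simp only [Nwt, dotP_eq_dotProduct, sub_dotProduct, sum_dotProduct]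

lemma Nwt_swap_mul (σ : Equiv.Perm (Fin N)) (hab : (a : ℕ) + 1 = b)
    (horth : dotP (simpleRoot m (u (σ.symm a))) (simpleRoot m (u (σ.symm b))) = 0)
    (t : Fin N) :
    Nwt Λ (Equiv.swap a b * σ) u t = Nwt Λ σ u t := by
  simp only [Nwt_eq_sub_sum, Equiv.Perm.mul_apply]
  congr 1
  refine sum_filter_congr_of_ne_zero fun j _ hj => and_congr_right fun _ => ?_
  refine swap_lt_swap_iff_of_succ_eq hab ?_ ?_
  · rintro ⟨hja, htb⟩
    obtain rfl := σ.eq_symm_apply.mpr hja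
    obtain rfl := σ.eq_symm_apply.mpr htb
    exact hj horth
  · rintro ⟨hjb, hta⟩
    obtain rfl := σ.eq_symm_apply.mpr hjb
    obtain rfl := σ.eq_symm_apply.mpr hta
    exact hj (by rw [dotP_comm, horth])

lemma Nwt_mul_swap (σ : Equiv.Perm (Fin N)) (hab : (a : ℕ) + 1 = b)
    (horth : dotP (simpleRoot m (u a)) (simpleRoot m (u b)) = 0) (t : Fin N) :
    Nwt Λ (σ * Equiv.swap a b) u (Equiv.swap a b t) = Nwt Λ σ (u ∘ Equiv.swap a b) t := by
  simp only [Nwt_eq_sub_sum, Equiv.Perm.mul_apply, Equiv.swap_apply_self, Function.comp_apply]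
  congr 1
  rw [sum_filter_comp_equiv (Equiv.swap a b)]
  simp only [Equiv.swap_apply_self]
  refine sum_filter_congr_of_ne_zero fun k _ hk => and_congr_left fun _ => ?_
  refine swap_le_swap_iff_of_succ_eq hab ?_ ?_
  · rintro ⟨rfl, rfl⟩
    exact hk (by rw [Equiv.swap_apply_left, Equiv.swap_apply_right, dotP_comm, horth])
  · rintro ⟨rfl, rfl⟩
    exact hk (by rw [Equiv.swap_apply_left, Equiv.swap_apply_right, horth])

lemma Nwt_one_comp_swap (hab : (a : ℕ) + 1 = b)
    (horth : dotP (simpleRoot m (u a)) (simpleRoot m (u b)) = 0) (t : Fin N) :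
    Nwt Λ 1 (u ∘ Equiv.swap a b) t = Nwt Λ 1 u (Equiv.swap a b t) := by
  calc Nwt Λ 1 (u ∘ Equiv.swap a b) t
      = Nwt Λ (1 * Equiv.swap a b) u (Equiv.swap a b t) := (Nwt_mul_swap Λ u 1 hab horth t).symm
    _ = Nwt Λ (Equiv.swap a b * 1) u (Equiv.swap a b t) := by rw [one_mul, mul_one]
    _ = Nwt Λ 1 u (Equiv.swap a b t) := Nwt_swap_mul Λ u 1 hab horth _

lemma Xsig_swap_mul (σ : Equiv.Perm (Fin N)) (hab : (a : ℕ) + 1 = b)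
    (horth : dotP (simpleRoot m (u (σ.symm a))) (simpleRoot m (u (σ.symm b))) = 0) :
    Xsig Λ (Equiv.swap a b * σ) u = Xsig Λ σ u := by
  simp only [Xsig, Nwt_swap_mul Λ u σ hab horth]

lemma Xsig_mul_swap (σ : Equiv.Perm (Fin N)) (hab : (a : ℕ) + 1 = b)
    (horth : dotP (simpleRoot m (u a)) (simpleRoot m (u b)) = 0) :
    Xsig Λ (σ * Equiv.swap a b) u = Xsig Λ σ (u ∘ Equiv.swap a b) := by
  rw [Xsig, ← Equiv.prod_comp (Equiv.swap a b)]
  simp only [Xsig, Nwt_mul_swap Λ u σ hab horth, Nwt_one_comp_swap Λ u hab horth]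

lemma mul_swap_mem_Sset_iff (σ : Equiv.Perm (Fin N)) :
    σ * Equiv.swap a b ∈ Sset u w ↔ σ ∈ Sset (u ∘ Equiv.swap a b) w := by
  simp only [Sset, mem_filter, mem_univ, true_and, Equiv.Perm.mul_apply, Function.comp_apply]
  exact (Equiv.swap a b).forall_congr fun {_} => by rw [Equiv.swap_apply_self]

lemma swap_mul_mem_Sset_iff (σ : Equiv.Perm (Fin N)) :
    Equiv.swap a b * σ ∈ Sset u w ↔ σ ∈ Sset u (w ∘ Equiv.swap a b) := by
  simp only [Sset, mem_filter, mem_univ, true_and, Equiv.Perm.mul_apply, Function.comp_apply]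

lemma apply_symm_of_mem_Sset {σ : Equiv.Perm (Fin N)} (hσ : σ ∈ Sset u w) (c : Fin N) :
    u (σ.symm c) = w c := by
  simpa using (mem_filter.mp hσ).2 (σ.symm c)

theorem pairing_comp_swap_left (hab : (a : ℕ) + 1 = b)
    (horth : dotP (simpleRoot m (u a)) (simpleRoot m (u b)) = 0) :
    pairing Λ (u ∘ Equiv.swap a b) w = pairing Λ u w :=
  sum_equiv (Equiv.mulRight (Equiv.swap a b)) (fun σ => (mul_swap_mem_Sset_iff u w σ).symm)
    fun σ _ => (Xsig_mul_swap Λ u σ hab horth).symm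

theorem pairing_comp_swap_right (hab : (a : ℕ) + 1 = b)
    (horth : dotP (simpleRoot m (w a)) (simpleRoot m (w b)) = 0) :
    pairing Λ u (w ∘ Equiv.swap a b) = pairing Λ u w := by
  refine sum_equiv (Equiv.mulLeft (Equiv.swap a b)) (fun σ => (swap_mul_mem_Sset_iff u w σ).symm)
    fun σ hσ => (Xsig_swap_mul Λ u σ hab ?_).symm
  rw [apply_symm_of_mem_Sset u _ hσ, apply_symm_of_mem_Sset u _ hσ, Function.comp_apply,
    Function.comp_apply, Equiv.swap_apply_left, Equiv.swap_apply_right, dotP_comm, horth]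

end Swap

/-- Distant swaps leave the closed formula invariant: if two adjacent entries of
`ū` (resp. of `w̄`) differ by at least 2, exchanging them does not change
`⟪ū,w̄⟫`. -/
theorem pairing_distant_swap (m n ℓ N : ℕ) (u w : Fin N → ℕ) (t : ℕ) (ht : t + 1 < N) :
    (2 ≤ |(u ⟨t, by omega⟩ : ℤ) - (u ⟨t + 1, ht⟩ : ℤ)| →
      pairing (LambdaVec m n ℓ) (u ∘ Equiv.swap ⟨t, by omega⟩ ⟨t + 1, ht⟩) w
        = pairing (LambdaVec m n ℓ) u w) ∧
    (2 ≤ |(w ⟨t, by omega⟩ : ℤ) - (w ⟨t + 1, ht⟩ : ℤ)| →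
      pairing (LambdaVec m n ℓ) u (w ∘ Equiv.swap ⟨t, by omega⟩ ⟨t + 1, ht⟩)
        = pairing (LambdaVec m n ℓ) u w) :=
  ⟨fun hu => pairing_comp_swap_left _ u w rfl (dotP_simpleRoot_eq_zero hu),
    fun hw => pairing_comp_swap_right _ u w rfl (dotP_simpleRoot_eq_zero hw)⟩

end
end
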